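/- Let k be a field of characteristic zero, C a coassociative, counital, cocommutative coalgebra over k coaugmented by a grouplike element 1, C̄ = ker ε with reduced comultiplication Δ̄, and L a Lie algebra over k; equip Hom_k(C̄, L) with the reduced convolution bracket [f, g] := β ∘ (f ⊗ g) ∘ Δ̄. If L is nilpotent of nilpotency class at most n (F^{n+1} L = 0), then the Lie algebra Hom_k(C̄, L) is nilpotent of nilpotency class at most n (F^{n+1} Hom_k(C̄, L) = 0). -/

import Mathlib

/-!
STATEMENT 10: With `C̄ = ker ε` and the reduced convolution bracket on `Hom_k(C̄, L)`: if `L`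
is nilpotent of class `≤ n` (`F^(n+1) L = 0`) then so is `Hom_k(C̄, L)`
(`F^(n+1) Hom_k(C̄, L) = 0`).  Here `lcsF k b m` denotes `F^(m+1)` for the bracket `b`.
-/

open TensorProduct

/-- The Lie bracket of `L`, as a linear map `L ⊗ L → L`. -/
noncomputable def lieBeta (k L : Type*) [Field k] [LieRing L] [LieAlgebra k L] :
    L ⊗[k] L →ₗ[k] L :=
  TensorProduct.lift
    (LinearMap.mk₂ k (fun x y => ⁅x, y⁆) add_lie smul_lie lie_add lie_smul)

/-- The reduced comultiplication `c ↦ Δ c − c ⊗ e − e ⊗ c`, as a map on all of `C`. -/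
noncomputable def redComul (k : Type*) {C : Type*} [Field k]
    [AddCommGroup C] [Module k C] [Coalgebra k C] (e : C) : C →ₗ[k] C ⊗[k] C :=
  Coalgebra.comul - (TensorProduct.mk k C C).flip e - TensorProduct.mk k C C e

/-- The reduced convolution bracket `β ∘ (f ⊗ g) ∘ Δ̄` on `Hom_k(C̄, L)`,
for a given reduced comultiplication `Δbar : C̄ → C̄ ⊗ C̄`. -/
noncomputable def redConvBr {k C L : Type*} [Field k]
    [AddCommGroup C] [Module k C] [Coalgebra k C] [LieRing L] [LieAlgebra k L]
    (Δbar : ↥(LinearMap.ker (Coalgebra.counit : C →ₗ[k] k)) →ₗ[k]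
      (↥(LinearMap.ker (Coalgebra.counit : C →ₗ[k] k)) ⊗[k]
        ↥(LinearMap.ker (Coalgebra.counit : C →ₗ[k] k))))
    (f g : ↥(LinearMap.ker (Coalgebra.counit : C →ₗ[k] k)) →ₗ[k] L) :
    ↥(LinearMap.ker (Coalgebra.counit : C →ₗ[k] k)) →ₗ[k] L :=
  lieBeta k L ∘ₗ TensorProduct.map f g ∘ₗ Δbar

/-- The lower central series of a bracket `b` on a `k`-module `M`:
`lcsF k b 0 = F¹ M = M` and `lcsF k b (n+1) = F^(n+2) M = [M, F^(n+1) M]`. -/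
def lcsF (k : Type*) {M : Type*} [Field k] [AddCommGroup M] [Module k M]
    (b : M → M → M) : ℕ → Submodule k M
  | 0 => ⊤
  | n + 1 => Submodule.span k {m | ∃ x y, y ∈ lcsF k b n ∧ m = b x y}

/-!
If `Δ̄ c = ∑ aᵢ ⊗ bᵢ`, then `[f, g] c = ∑ ⁅f aᵢ, g bᵢ⁆`. Hence, by induction on `m`, every
element of `F^m Hom(C̄, L)` takes all its values in `F^m L`, so `F^(n+1) L = 0` forces
`F^(n+1) Hom(C̄, L) = 0`.
-/

section ConvolutionBracket

variable {k V L : Type*} [Field k] [AddCommGroup V] [Module k V] [LieRing L] [LieAlgebra k L]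

lemma lieBeta_map_mem_span (f g : V →ₗ[k] L) (P : Submodule k L) (hg : ∀ v, g v ∈ P)
    (t : V ⊗[k] V) :
    lieBeta k L (TensorProduct.map f g t) ∈
      Submodule.span k {m | ∃ x y : L, y ∈ P ∧ m = ⁅x, y⁆} := by
  induction t using TensorProduct.induction_on with
  | zero => simp
  | tmul a b => exact Submodule.subset_span ⟨f a, g b, hg b, rfl⟩
  | add t₁ t₂ h₁ h₂ => simpa only [map_add] using Submodule.add_mem _ h₁ h₂

theorem lcsF_convolution_le (Δ : V →ₗ[k] V ⊗[k] V) (n : ℕ) :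
    lcsF k (fun f g : V →ₗ[k] L => lieBeta k L ∘ₗ TensorProduct.map f g ∘ₗ Δ) n ≤
      ⨅ v, (lcsF k (fun x y : L => ⁅x, y⁆) n).comap (LinearMap.applyₗ v) := by
  induction n with
  | zero => simp [lcsF]
  | succ n ih =>
    refine Submodule.span_le.mpr ?_
    rintro _ ⟨f, g, hg, rfl⟩
    refine Submodule.mem_iInf _ |>.mpr fun v => ?_
    exact lieBeta_map_mem_span f g _ (fun w => Submodule.mem_iInf _ |>.mp (ih hg) w) (Δ v)

end ConvolutionBracket

theorem reduced_convolution_nilpotent_of_nilpotent_general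
    (k C L : Type*) [Field k]
    [AddCommGroup C] [Module k C] [Coalgebra k C]
    [LieRing L] [LieAlgebra k L]
    -- `Δ̄ : C̄ → C̄ ⊗ C̄` is the reduced comultiplication:
    (Δbar : ↥(LinearMap.ker (Coalgebra.counit : C →ₗ[k] k)) →ₗ[k]
      (↥(LinearMap.ker (Coalgebra.counit : C →ₗ[k] k)) ⊗[k]
        ↥(LinearMap.ker (Coalgebra.counit : C →ₗ[k] k))))
    (n : ℕ)
    -- `L` is nilpotent of class at most `n`, i.e. `F^(n+1) L = 0`:
    (hL : lcsF k (fun x y : L => ⁅x, y⁆) n = ⊥) :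
    -- then `Hom_k(C̄, L)` is nilpotent of class at most `n`:
    lcsF k (fun f g : ↥(LinearMap.ker (Coalgebra.counit : C →ₗ[k] k)) →ₗ[k] L =>
      redConvBr Δbar f g) n = ⊥ := by
  refine eq_bot_iff.mpr fun f hf => ?_
  have hvalues := Submodule.mem_iInf _ |>.mp (lcsF_convolution_le Δbar n hf)
  simp only [hL, Submodule.comap_bot, LinearMap.mem_ker, LinearMap.applyₗ_apply_apply] at hvalues
  exact LinearMap.ext hvalues

theorem reduced_convolution_nilpotent_of_nilpotent
    (k C L : Type*) [Field k] [CharZero k]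
    [AddCommGroup C] [Module k C] [Coalgebra k C]
    -- `C` is cocommutative:
    (hcc : (TensorProduct.comm k C C).toLinearMap ∘ₗ Coalgebra.comul =
      (Coalgebra.comul : C →ₗ[k] C ⊗[k] C))
    -- `e` is a grouplike coaugmentation:
    (e : C) (he1 : Coalgebra.comul e = e ⊗ₜ[k] e) (he2 : Coalgebra.counit e = (1 : k))
    [LieRing L] [LieAlgebra k L]
    -- `Δ̄ : C̄ → C̄ ⊗ C̄` is the reduced comultiplication:
    (Δbar : ↥(LinearMap.ker (Coalgebra.counit : C →ₗ[k] k)) →ₗ[k]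
      (↥(LinearMap.ker (Coalgebra.counit : C →ₗ[k] k)) ⊗[k]
        ↥(LinearMap.ker (Coalgebra.counit : C →ₗ[k] k))))
    (hΔbar : TensorProduct.map
        (LinearMap.ker (Coalgebra.counit : C →ₗ[k] k)).subtype
        (LinearMap.ker (Coalgebra.counit : C →ₗ[k] k)).subtype ∘ₗ Δbar =
      redComul k e ∘ₗ (LinearMap.ker (Coalgebra.counit : C →ₗ[k] k)).subtype)
    (n : ℕ)
    -- `L` is nilpotent of class at most `n`, i.e. `F^(n+1) L = 0`:
    (hL : lcsF k (fun x y : L => ⁅x, y⁆) n = ⊥) :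
    -- then `Hom_k(C̄, L)` is nilpotent of class at most `n`:
    lcsF k (fun f g : ↥(LinearMap.ker (Coalgebra.counit : C →ₗ[k] k)) →ₗ[k] L =>
      redConvBr Δbar f g) n = ⊥ :=
  reduced_convolution_nilpotent_of_nilpotent_general k C L Δbar n hL
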